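/- Let G be a finite group with G' = Z(G) and suppose Z(G) is elementary abelian of exponent p. If every automorphism of G is central, then Aut(G) is an elementary abelian p-group. -/

import Mathlib

/-!
Every automorphism `φ` moves each `x` by a central element, and central factors drop out of
commutators, so `φ` fixes every commutator and hence, as `G' = Z(G)`, fixes `Z(G)` pointwise.
Then `φ ↦ (x ↦ x⁻¹ φ x)` is an injective homomorphism from `Aut(G)` into the abelian group of
maps `G → Z(G)`, all of whose elements have order dividing `p`.
-/

open scoped commutatorElement

section

variable {G : Type*} [Group G]

lemma commutatorElement_mul_mem_center {a b z w : G} (hz : z ∈ Subgroup.center G)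
    (hw : w ∈ Subgroup.center G) : ⁅a * z, b * w⁆ = ⁅a, b⁆ := by
  rw [Subgroup.mem_center_iff] at hz hw
  calc ⁅a * z, b * w⁆ = a * (z * b) * (w * (z⁻¹ * a⁻¹)) * w⁻¹ * b⁻¹ := by
        rw [commutatorElement_def]; group
    _ = a * (b * z) * ((z⁻¹ * a⁻¹) * w) * w⁻¹ * b⁻¹ := by rw [hz b, hw]
    _ = ⁅a, b⁆ := by rw [commutatorElement_def]; group

lemma MonoidHom.apply_eq_self_of_mem_commutator (f : G →* G)
    (hf : ∀ x, x⁻¹ * f x ∈ Subgroup.center G) {z : G} (hz : z ∈ commutator G) : f z = z := by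
  rw [commutator_eq_closure] at hz
  induction hz using Subgroup.closure_induction with
  | mem w hw =>
    obtain ⟨a, b, rfl⟩ := hw
    rw [map_commutatorElement, ← mul_inv_cancel_left a (f a), ← mul_inv_cancel_left b (f b),
      commutatorElement_mul_mem_center (hf a) (hf b)]
  | one => exact map_one f
  | mul u v _ _ hu hv => rw [map_mul, hu, hv]
  | inv u _ hu => rw [map_inv, hu]

namespace MulAut

lemma inv_mul_mul_apply {φ ψ : MulAut G} {x : G} (hφ : φ (x⁻¹ * ψ x) = x⁻¹ * ψ x) :
    x⁻¹ * (φ * ψ) x = (x⁻¹ * φ x) * (x⁻¹ * ψ x) := by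
  conv_lhs => rw [mul_apply, ← mul_inv_cancel_left x (ψ x), map_mul, hφ]
  group

def centralDisplacement (hcent : ∀ (φ : MulAut G) (x : G), x⁻¹ * φ x ∈ Subgroup.center G)
    (hfix : ∀ (φ : MulAut G), ∀ z ∈ Subgroup.center G, φ z = z) :
    MulAut G →* (G → Subgroup.center G) where
  toFun φ x := ⟨x⁻¹ * φ x, hcent φ x⟩
  map_one' := by ext x; simp
  map_mul' φ ψ := by ext x; exact inv_mul_mul_apply (hfix φ _ (hcent ψ x))

lemma centralDisplacement_injective
    (hcent : ∀ (φ : MulAut G) (x : G), x⁻¹ * φ x ∈ Subgroup.center G)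
    (hfix : ∀ (φ : MulAut G), ∀ z ∈ Subgroup.center G, φ z = z) :
    Function.Injective (centralDisplacement hcent hfix) := fun φ ψ hφψ => by
  ext x
  exact mul_left_cancel (congrArg (fun f => (f x : G)) hφψ)

end MulAut

end

theorem stmt_8_general (p : ℕ) (G : Type*) [Group G]
    (h : commutator G = Subgroup.center G)
    (helem : ∀ z ∈ Subgroup.center G, z ^ p = 1)
    (hcent : ∀ (φ : MulAut G) (x : G), x⁻¹ * φ x ∈ Subgroup.center G) :
    (∀ φ ψ : MulAut G, φ * ψ = ψ * φ) ∧ ∀ φ : MulAut G, φ ^ p = 1 := by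
  have hfix (φ : MulAut G) (z : G) (hz : z ∈ Subgroup.center G) : φ z = z :=
    φ.toMonoidHom.apply_eq_self_of_mem_commutator (hcent φ) (h ▸ hz)
  have hinj := MulAut.centralDisplacement_injective hcent hfix
  refine ⟨fun φ ψ => hinj ?_, fun φ => hinj ?_⟩
  · rw [map_mul, map_mul]
    funext x
    exact mul_comm' _ _
  · rw [map_pow, map_one]
    funext x
    exact Subtype.ext (helem _ (hcent φ x))

/-- If `G` is finite with `G' = Z(G)`, `Z(G)` elementary abelian of exponent `p`, and every
automorphism of `G` is central, then `Aut(G)` is an elementary abelian `p`-group. -/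
theorem stmt_8 (p : ℕ) (hp : p.Prime) (G : Type*) [Group G] [Finite G]
    (h : commutator G = Subgroup.center G)
    (helem : ∀ z ∈ Subgroup.center G, z ^ p = 1)
    (hcent : ∀ (φ : MulAut G) (x : G), x⁻¹ * φ x ∈ Subgroup.center G) :
    (∀ φ ψ : MulAut G, φ * ψ = ψ * φ) ∧ ∀ φ : MulAut G, φ ^ p = 1 :=
  stmt_8_general p G h helem hcent
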